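/- arXiv:0904.3780 — 6 statements merged into one kernel-verified Lean document; each statement's English description precedes it below -/
import Mathlib

section
/- Let μ, ε, α, ρ be positive reals with ρ < 1 and μ ≥ 4αε/(1-ρ). Define the sequence E(1) = 2αε/(1-ρ) and E(k+1) = (1 + E(k)/(μ - E(k)))·α·ε / (1 - ρ·E(k)/(μ - E(k))). Then E(2) ≤ E(1). -/
/-! With `e = E 1` and `t = e / (μ - e)`, the hypothesis `μ ≥ 2e` says exactly `t ≤ 1`.
After clearing denominators, `E 2 ≤ E 1` becomes `(1 + t)(1 - ρ) ≤ 2(1 - ρt)`,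
i.e. `(1 + ρ)(t - 1) ≤ 0`. -/

lemma div_sub_self_le_one {e μ : ℝ} (he : 0 < e) (hμ : 2 * e ≤ μ) : e / (μ - e) ≤ 1 :=
  (div_le_one (by linarith)).2 (by linarith)

lemma one_add_mul_div_one_sub_mul_le {a ρ t : ℝ} (ha : 0 ≤ a) (hρ0 : -1 ≤ ρ) (hρ1 : ρ < 1)
    (ht0 : 0 ≤ t) (ht1 : t ≤ 1) :
    (1 + t) * a / (1 - ρ * t) ≤ 2 * a / (1 - ρ) := by
  have hρt : 0 < 1 - ρ * t := by nlinarith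
  rw [div_le_div_iff₀ hρt (by linarith)]
  nlinarith [mul_nonneg ha (mul_nonneg (by linarith : 0 ≤ 1 + ρ) (by linarith : 0 ≤ 1 - t))]

theorem reweighted_base_case_general
    (α ε ρ μ : ℝ) (hα : 0 < α) (hε : 0 < ε) (hρ0 : 0 < ρ) (hρ1 : ρ < 1)
    (hμ : μ ≥ 4 * α * ε / (1 - ρ))
    (E : ℕ → ℝ)
    (hE1 : E 1 = 2 * α * ε / (1 - ρ))
    (hrec : ∀ k ≥ 1, E (k + 1) =
      (1 + E k / (μ - E k)) * α * ε / (1 - ρ * (E k / (μ - E k)))) :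
    E 2 ≤ E 1 := by
  have hE1_pos : 0 < E 1 := hE1 ▸ div_pos (by positivity) (by linarith)
  have hμE1 : 2 * E 1 ≤ μ := by
    calc 2 * E 1 = 4 * α * ε / (1 - ρ) := by rw [hE1]; ring
      _ ≤ μ := hμ
  have hE1_lt_μ : 0 < μ - E 1 := by linarith
  rw [hrec 1 le_rfl]
  refine le_of_le_of_eq ?_ hE1.symm
  simpa only [mul_assoc] using one_add_mul_div_one_sub_mul_le (mul_pos hα hε).le (by linarith)
    hρ1 (div_pos hE1_pos hE1_lt_μ).le (div_sub_self_le_one hE1_pos hμE1)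

theorem reweighted_base_case
    (α ε ρ μ : ℝ) (hα : 0 < α) (hε : 0 < ε) (hρ0 : 0 < ρ) (hρ1 : ρ < 1)
    (hμ0 : 0 < μ) (hμ : μ ≥ 4 * α * ε / (1 - ρ))
    (E : ℕ → ℝ)
    (hE1 : E 1 = 2 * α * ε / (1 - ρ))
    (hrec : ∀ k ≥ 1, E (k + 1) =
      (1 + E k / (μ - E k)) * α * ε / (1 - ρ * (E k / (μ - E k)))) :
    E 2 ≤ E 1 :=
  reweighted_base_case_general α ε ρ μ hα hε hρ0 hρ1 hμ E hE1 hrec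
end

section
/- Let μ, ε, α, ρ be positive reals with ρ < 1 and μ ≥ 4αε/(1-ρ). Define f(t) = (1 + t/(μ - t))·α·ε / (1 - ρ·t/(μ - t)) for 0 ≤ t < μ/(1+ρ). Then f is monotone increasing on this interval. -/
/-! On its domain the update map collapses to `t ↦ α ε μ / (μ - (1 + ρ) t)`, a positive constant
over a positive, decreasing denominator. -/

lemma one_add_div_sub_self {μ x : ℝ} (h : μ - x ≠ 0) : 1 + x / (μ - x) = μ / (μ - x) := by
  field_simp
  ring

lemma one_sub_mul_div_sub_self (ρ : ℝ) {μ x : ℝ} (h : μ - x ≠ 0) :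
    1 - ρ * (x / (μ - x)) = (μ - (1 + ρ) * x) / (μ - x) := by
  field_simp
  ring

lemma one_add_div_sub_mul_div_one_sub_mul_div_sub (c ρ : ℝ) {μ x : ℝ} (h : μ - x ≠ 0) :
    (1 + x / (μ - x)) * c / (1 - ρ * (x / (μ - x))) = c * μ / (μ - (1 + ρ) * x) := by
  rw [one_add_div_sub_self h, one_sub_mul_div_sub_self ρ h, div_mul_eq_mul_div,
    div_div_div_cancel_right₀ h, mul_comm]

theorem reweighted_update_monotone_general
    (α ε ρ μ : ℝ) (hα : 0 < α) (hε : 0 < ε) (hρ0 : 0 < ρ)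
    (f : ℝ → ℝ)
    (hf : ∀ t, f t = (1 + t / (μ - t)) * α * ε / (1 - ρ * (t / (μ - t)))) :
    ∀ s t : ℝ, 0 ≤ s → s ≤ t → t < μ / (1 + ρ) → f s ≤ f t := by
  intro s t hs hst ht
  have hdt : 0 < μ - (1 + ρ) * t := by
    have := (lt_div_iff₀ (by linarith : 0 < 1 + ρ)).mp ht
    linarith
  have hμ : 0 ≤ μ := by nlinarith
  have hsub : ∀ x, 0 ≤ x → x ≤ t → μ - x ≠ 0 := fun x hx hxt ↦ by nlinarith
  rw [hf, hf, mul_assoc, mul_assoc, one_add_div_sub_mul_div_one_sub_mul_div_sub _ _ (hsub s hs hst),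
    one_add_div_sub_mul_div_one_sub_mul_div_sub _ _ (hsub t (hs.trans hst) le_rfl)]
  apply div_le_div_of_nonneg_left (by positivity) hdt
  nlinarith

theorem reweighted_update_monotone
    (α ε ρ μ : ℝ) (hα : 0 < α) (hε : 0 < ε) (hρ0 : 0 < ρ) (hρ1 : ρ < 1)
    (hμ0 : 0 < μ) (hμ : μ ≥ 4 * α * ε / (1 - ρ))
    (f : ℝ → ℝ)
    (hf : ∀ t, f t = (1 + t / (μ - t)) * α * ε / (1 - ρ * (t / (μ - t)))) :
    ∀ s t : ℝ, 0 ≤ s → s ≤ t → t < μ / (1 + ρ) → f s ≤ f t :=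
  reweighted_update_monotone_general α ε ρ μ hα hε hρ0 f hf
end

section
/- Let μ, ε, α, ρ be positive reals with ρ < 1 and μ ≥ 4αε/(1-ρ). The sequence defined by E(1) = 2αε/(1-ρ) and E(k+1) = (1 + E(k)/(μ - E(k)))·α·ε / (1 - ρ·E(k)/(μ - E(k))) is monotonically decreasing and bounded below by 0, and hence converges. -/
/-!
Writing `B = 2αε/(1-ρ)`, the recursion is `E (k+1) = g (E k)` with
`g x = αεμ / (μ - (1+ρ)x)`, an increasing map on `[0, B]` with `g 0 = αε ≥ 0`, and
`μ ≥ 2B` is exactly the condition `g B ≤ B`. So `g` maps `[0, B]` into itself, and the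
orbit of the top point `E 1 = B` decreases and stays in `[0, B]`.
-/

open Set Filter Topology

noncomputable def reweightStep (α ε ρ μ x : ℝ) : ℝ :=
  (1 + x / (μ - x)) * α * ε / (1 - ρ * (x / (μ - x)))

lemma orbit_mem_Icc_and_antitone_of_monotoneOn {β : Type*} [Preorder β] {g : β → β} {a b : β}
    {u : ℕ → β} (hg : MonotoneOn g (Icc a b)) (hab : a ≤ b) (ha : a ≤ g a) (hb : g b ≤ b)
    (hu1 : u 1 = b) (hu : ∀ k ≥ 1, u (k + 1) = g (u k)) :
    ∀ k ≥ 1, u k ∈ Icc a b ∧ u (k + 1) ≤ u k := by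
  have hmaps : MapsTo g (Icc a b) (Icc a b) := fun x hx =>
    ⟨ha.trans (hg ⟨le_rfl, hab⟩ hx hx.1), (hg hx ⟨hab, le_rfl⟩ hx.2).trans hb⟩
  intro k hk
  induction k, hk using Nat.le_induction with
  | base => exact ⟨by rw [hu1]; exact ⟨hab, le_rfl⟩, by rw [hu 1 le_rfl, hu1]; exact hb⟩
  | succ k hk ih =>
    have hmem : u (k + 1) ∈ Icc a b := by rw [hu k hk]; exact hmaps ih.1
    refine ⟨hmem, ?_⟩
    calc u (k + 1 + 1) = g (u (k + 1)) := hu (k + 1) (by omega)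
      _ ≤ g (u k) := hg hmem ih.1 ih.2
      _ = u (k + 1) := (hu k hk).symm

lemma exists_tendsto_of_antitone_from_one {u : ℕ → ℝ} {a : ℝ}
    (hanti : ∀ k ≥ 1, u (k + 1) ≤ u k) (hbdd : ∀ k ≥ 1, a ≤ u k) :
    ∃ L, Tendsto u atTop (𝓝 L) := by
  have hshift : Antitone fun n => u (n + 1) :=
    antitone_nat_of_succ_le fun n => hanti (n + 1) (by omega)
  have hshift_bdd : BddBelow (range fun n => u (n + 1)) :=
    ⟨a, by rintro - ⟨n, rfl⟩; exact hbdd (n + 1) (by omega)⟩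
  exact ⟨_, (tendsto_add_atTop_iff_nat 1).mp (tendsto_atTop_ciInf hshift hshift_bdd)⟩

section

variable {α ε ρ μ : ℝ}

lemma reweightStep_eq {x : ℝ} (hρ : 0 ≤ ρ) (hx : 0 ≤ x) (hxμ : (1 + ρ) * x < μ) :
    reweightStep α ε ρ μ x = α * ε * μ / (μ - (1 + ρ) * x) := by
  have h1 : μ - x ≠ 0 := by nlinarith
  have h2 : μ - (1 + ρ) * x ≠ 0 := by linarith
  unfold reweightStep
  field_simp
  ring

lemma reweightStep_zero : reweightStep α ε ρ μ 0 = α * ε := by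
  simp [reweightStep]

lemma reweightStep_monotoneOn (hαε : 0 ≤ α * ε) (hρ : 0 ≤ ρ) :
    MonotoneOn (reweightStep α ε ρ μ) (Ico 0 (μ / (1 + ρ))) := by
  intro x ⟨hx0, hxμ⟩ y ⟨hy0, hyμ⟩ hxy
  rw [lt_div_iff₀' (by linarith)] at hxμ hyμ
  rw [reweightStep_eq hρ hx0 hxμ, reweightStep_eq hρ hy0 hyμ]
  have hμ : 0 < μ := by nlinarith
  exact div_le_div_of_nonneg_left (by positivity) (by linarith) (by nlinarith)

lemma reweightStep_le_of_four_mul_le (hα : 0 < α) (hε : 0 < ε) (hρ0 : 0 ≤ ρ) (hρ1 : ρ < 1)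
    (hμ : 4 * α * ε / (1 - ρ) ≤ μ) :
    reweightStep α ε ρ μ (2 * α * ε / (1 - ρ)) ≤ 2 * α * ε / (1 - ρ) := by
  set B := 2 * α * ε / (1 - ρ) with hB
  have hρ : 0 < 1 - ρ := by linarith
  have hB0 : 0 < B := by positivity
  have hαε : α * ε = B * (1 - ρ) / 2 := by rw [hB]; field_simp
  have hμB : 2 * B ≤ μ := by rw [hB]; convert hμ using 1; ring
  have hden : 0 < μ - (1 + ρ) * B := by nlinarith
  rw [reweightStep_eq hρ0 hB0.le (by linarith), div_le_iff₀ hden, hαε]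
  nlinarith [mul_le_mul_of_nonneg_left hμB (by positivity : (0 : ℝ) ≤ (1 + ρ) * B)]

end

theorem reweighted_sequence_converges_general
    (α ε ρ μ : ℝ) (hα : 0 < α) (hε : 0 < ε) (hρ0 : 0 < ρ) (hρ1 : ρ < 1)
    (hμ : μ ≥ 4 * α * ε / (1 - ρ))
    (E : ℕ → ℝ)
    (hE1 : E 1 = 2 * α * ε / (1 - ρ))
    (hrec : ∀ k ≥ 1, E (k + 1) =
      (1 + E k / (μ - E k)) * α * ε / (1 - ρ * (E k / (μ - E k)))) :
    (∀ k ≥ 1, E (k + 1) ≤ E k) ∧ (∀ k ≥ 1, 0 ≤ E k) ∧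
      ∃ L : ℝ, Filter.Tendsto E Filter.atTop (nhds L) := by
  set B := 2 * α * ε / (1 - ρ) with hB
  have hB0 : 0 < B := div_pos (by positivity) (by linarith)
  have hBμ : B < μ / (1 + ρ) := by
    rw [lt_div_iff₀ (by linarith)]
    have : 4 * α * ε / (1 - ρ) = 2 * B := by rw [hB]; ring
    nlinarith
  have hmono : MonotoneOn (reweightStep α ε ρ μ) (Icc 0 B) :=
    (reweightStep_monotoneOn (by positivity) hρ0.le).mono (Icc_subset_Ico_right hBμ)
  have hinv := orbit_mem_Icc_and_antitone_of_monotoneOn hmono hB0.le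
    (by rw [reweightStep_zero]; positivity) (reweightStep_le_of_four_mul_le hα hε hρ0.le hρ1 hμ)
    hE1 hrec
  have hanti : ∀ k ≥ 1, E (k + 1) ≤ E k := fun k hk => (hinv k hk).2
  have hnonneg : ∀ k ≥ 1, 0 ≤ E k := fun k hk => (hinv k hk).1.1
  exact ⟨hanti, hnonneg, exists_tendsto_of_antitone_from_one hanti hnonneg⟩

theorem reweighted_sequence_converges
    (α ε ρ μ : ℝ) (hα : 0 < α) (hε : 0 < ε) (hρ0 : 0 < ρ) (hρ1 : ρ < 1)
    (hμ0 : 0 < μ) (hμ : μ ≥ 4 * α * ε / (1 - ρ))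
    (E : ℕ → ℝ)
    (hE1 : E 1 = 2 * α * ε / (1 - ρ))
    (hrec : ∀ k ≥ 1, E (k + 1) =
      (1 + E k / (μ - E k)) * α * ε / (1 - ρ * (E k / (μ - E k)))) :
    (∀ k ≥ 1, E (k + 1) ≤ E k) ∧ (∀ k ≥ 1, 0 ≤ E k) ∧
      ∃ L : ℝ, Filter.Tendsto E Filter.atTop (nhds L) :=
  reweighted_sequence_converges_general α ε ρ μ hα hε hρ0 hρ1 hμ E hE1 hrec
end

section
/- Let h ∈ ℝᵈ, let T₀ ⊆ {1,…,d} with |T₀| = s, and let T₁ be the set of s indices of largest absolute value of h restricted to T₀ᶜ. Then ‖h restricted to (T₀ ∪ T₁)ᶜ‖₂ ≤ ‖h restricted to T₀ᶜ‖₁ / √s. -/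
/-!
Every entry of `h` off `T₀ ∪ T₁` is dominated by each of the `s` entries on `T₁`, hence by their
average, hence by `‖h_{T₀ᶜ}‖₁ / s`. Bounding one factor of each `h_j ^ 2` by this and summing the
other gives `‖h_{(T₀ ∪ T₁)ᶜ}‖₂² ≤ ‖h_{T₀ᶜ}‖₁² / s`.
-/

open Finset

namespace Finset

variable {ι : Type*}

lemma le_sum_div_card_of_forall_le {A : Finset ι} {f : ι → ℝ} {x : ℝ} (hA : A.Nonempty)
    (hx : ∀ i ∈ A, x ≤ f i) : x ≤ (∑ i ∈ A, f i) / #A := by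
  rw [le_div_iff₀ (by exact_mod_cast hA.card_pos), mul_comm, ← nsmul_eq_mul]
  exact card_nsmul_le_sum A f x hx

lemma sum_sq_le_mul_sum_abs {A : Finset ι} {f : ι → ℝ} {M : ℝ} (hM : ∀ i ∈ A, |f i| ≤ M) :
    ∑ i ∈ A, f i ^ 2 ≤ M * ∑ i ∈ A, |f i| := by
  rw [mul_sum]
  refine sum_le_sum fun i hi => ?_
  rw [← sq_abs, sq]
  exact mul_le_mul_of_nonneg_right (hM i hi) (abs_nonneg _)

lemma sum_sq_sdiff_le_sq_sum_abs_div_card [DecidableEq ι] {U A : Finset ι} {f : ι → ℝ}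
    (hA : A.Nonempty) (hAU : A ⊆ U) (hlargest : ∀ i ∈ A, ∀ j ∈ U \ A, |f j| ≤ |f i|) :
    ∑ j ∈ U \ A, f j ^ 2 ≤ (∑ i ∈ U, |f i|) ^ 2 / #A := by
  set S := ∑ i ∈ U, |f i|
  have habs_nonneg : ∀ i ∈ U, 0 ≤ |f i| := fun i _ => abs_nonneg _
  have htail_le_avg : ∀ j ∈ U \ A, |f j| ≤ S / #A := fun j hj =>
    (le_sum_div_card_of_forall_le hA fun i hi => hlargest i hi j hj).trans <|
      div_le_div_of_nonneg_right (sum_le_sum_of_subset_of_nonneg hAU fun i hi _ => habs_nonneg i hi)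
        (Nat.cast_nonneg _)
  calc ∑ j ∈ U \ A, f j ^ 2 ≤ S / #A * ∑ j ∈ U \ A, |f j| := sum_sq_le_mul_sum_abs htail_le_avg
    _ ≤ S / #A * S := by
      gcongr
      exact sum_le_sum_of_subset_of_nonneg sdiff_subset fun i hi _ => habs_nonneg i hi
    _ = S ^ 2 / #A := by ring

end Finset

theorem tail_l2_bound_general
    (d s : ℕ) (hs : 0 < s)
    (h : Fin d → ℝ) (T₀ T₁ : Finset (Fin d))
    (hT₁ : T₁.card = s) (hT₁sub : T₁ ⊆ T₀ᶜ)
    (hlargest : ∀ i ∈ T₁, ∀ j ∈ T₀ᶜ \ T₁, |h j| ≤ |h i|) :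
    Real.sqrt (∑ i ∈ (T₀ ∪ T₁)ᶜ, (h i) ^ 2) ≤
      (∑ i ∈ T₀ᶜ, |h i|) / Real.sqrt s := by
  have hT₁ne : T₁.Nonempty := card_pos.mp (hT₁ ▸ hs)
  have htail : (T₀ ∪ T₁)ᶜ = T₀ᶜ \ T₁ := by rw [compl_union, sdiff_eq_inter_compl]
  have hsq := sum_sq_sdiff_le_sq_sum_abs_div_card hT₁ne hT₁sub hlargest
  rw [hT₁] at hsq
  rw [htail]
  calc Real.sqrt (∑ i ∈ T₀ᶜ \ T₁, h i ^ 2) ≤ Real.sqrt ((∑ i ∈ T₀ᶜ, |h i|) ^ 2 / s) :=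
        Real.sqrt_le_sqrt hsq
    _ = (∑ i ∈ T₀ᶜ, |h i|) / Real.sqrt s := by
      rw [Real.sqrt_div (sq_nonneg _), Real.sqrt_sq (sum_nonneg fun i _ => abs_nonneg _)]

theorem tail_l2_bound
    (d s : ℕ) (hs : 0 < s) (hd : 2 * s ≤ d)
    (h : Fin d → ℝ) (T₀ T₁ : Finset (Fin d))
    (hT₀ : T₀.card = s) (hT₁ : T₁.card = s) (hT₁sub : T₁ ⊆ T₀ᶜ)
    (hlargest : ∀ i ∈ T₁, ∀ j ∈ T₀ᶜ \ T₁, |h j| ≤ |h i|) :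
    Real.sqrt (∑ i ∈ (T₀ ∪ T₁)ᶜ, (h i) ^ 2) ≤
      (∑ i ∈ T₀ᶜ, |h i|) / Real.sqrt s :=
  tail_l2_bound_general d s hs h T₀ T₁ hT₁ hT₁sub hlargest
end

section
/- Let x ∈ ℝᵈ, s ≤ d, and let T₀ be the support of the s largest-magnitude coordinates of x. Then every coordinate of x outside T₀ satisfies |x_i| ≤ ‖x restricted to the indices ranked s/2+1,…,s‖₁ · (2/s); consequently ‖x - x_s‖₂² ≤ (2/s)·‖x - x_{s/2}‖₁². -/
open Finset

theorem Finset.sum_sq_le_mul_sum_abs_s16 {ι : Type*} {s : Finset ι} {f : ι → ℝ} {c : ℝ}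
    (h : ∀ i ∈ s, |f i| ≤ c) : ∑ i ∈ s, f i ^ 2 ≤ c * ∑ i ∈ s, |f i| := by
  rw [mul_sum]
  refine sum_le_sum fun i hi => ?_
  rw [← sq_abs, sq]
  exact mul_le_mul_of_nonneg_right (h i hi) (abs_nonneg _)

theorem tail_coordinate_bound_general
    (d t : ℕ) (ht : 0 < t) (x : Fin d → ℝ)
    (T S : Finset (Fin d))
    (hT : T.card = 2 * t) (hS : S.card = t) (hST : S ⊆ T)
    (hTtop : ∀ i ∈ T, ∀ j ∉ T, |x j| ≤ |x i|) :
    (∀ i ∉ T, |x i| ≤ (2 / (2 * t : ℝ)) * ∑ j ∈ T \ S, |x j|) ∧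
      ∑ i ∈ Tᶜ, (x i) ^ 2 ≤ (2 / (2 * t : ℝ)) * (∑ i ∈ Sᶜ, |x i|) ^ 2 := by
  have hcard : #(T \ S) = t := by rw [card_sdiff_of_subset hST, hT, hS]; omega
  have hne : (T \ S).Nonempty := card_pos.1 (hcard ▸ ht)
  have tail : ∀ i ∉ T, |x i| ≤ (2 / (2 * t : ℝ)) * ∑ j ∈ T \ S, |x j| := by
    intro i hi
    have avg := le_expect hne fun j hj => hTtop j (mem_sdiff.1 hj).1 i hi
    rw [expect_eq_sum_div_card, hcard] at avg
    calc |x i| ≤ (∑ j ∈ T \ S, |x j|) / t := avg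
      _ = (2 / (2 * t : ℝ)) * ∑ j ∈ T \ S, |x j| := by field_simp
  refine ⟨tail, ?_⟩
  calc ∑ i ∈ Tᶜ, x i ^ 2 ≤ ((2 / (2 * t : ℝ)) * ∑ j ∈ T \ S, |x j|) * ∑ i ∈ Tᶜ, |x i| :=
        sum_sq_le_mul_sum_abs_s16 fun i hi => tail i (mem_compl.1 hi)
    _ ≤ (2 / (2 * t : ℝ)) * (∑ i ∈ Sᶜ, |x i|) ^ 2 := by
        rw [mul_assoc, sq]
        gcongr
        exact fun j hj => mem_compl.2 (mem_sdiff.1 hj).2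

theorem tail_coordinate_bound
    (d t : ℕ) (ht : 0 < t) (x : Fin d → ℝ)
    (T S : Finset (Fin d))
    (hT : T.card = 2 * t) (hS : S.card = t) (hST : S ⊆ T)
    (hTtop : ∀ i ∈ T, ∀ j ∉ T, |x j| ≤ |x i|)
    (hStop : ∀ i ∈ S, ∀ j ∉ S, |x j| ≤ |x i|) :
    (∀ i ∉ T, |x i| ≤ (2 / (2 * t : ℝ)) * ∑ j ∈ T \ S, |x j|) ∧
      ∑ i ∈ Tᶜ, (x i) ^ 2 ≤ (2 / (2 * t : ℝ)) * (∑ i ∈ Sᶜ, |x i|) ^ 2 :=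
  tail_coordinate_bound_general d t ht x T S hT hS hST hTtop
end

section
/- Assume an m×d matrix Φ satisfies the restricted isometry property of order 2s with constant δ < √2 - 1. Let x be s-sparse, e ∈ ℝᵐ with ‖e‖₂ ≤ ε, u = Φx + e, and let μ = min over the support of x of |x_i| satisfy μ ≥ 4αε/(1-ρ), where ρ = √2δ/(1-δ) and α = 2√(1+δ)/(1-δ). Then the limiting approximation x̂ produced by iteratively reweighted ℓ1-minimization (with stability parameter a → 0) satisfies ‖x - x̂‖₂ ≤ 2αε / (1 + √(1 - 4αε/μ - 4αερ/μ)) ≤ 2αε/(1+ρ). -/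
/-!
Candès' RIP argument bounds the error `h = v - x` of any feasible `v` whose error lies in the cone
`‖h_{Tᶜ}‖₁ ≤ γ ‖h_T‖₁`, `T` the support of `x`, by `√(1 + γ²) α ε / (1 - ρ γ)`. Plain
`ℓ1`-minimality puts the first error in the cone with `γ = 1`. If the previous iterate is within
`A` of `x` in every coordinate, the inverse weights `|X k i| + a` are at most `A + a` off `T` and at
least `μ - A + a` on `T`, so reweighted minimality gives the cone with `γ = (A + a) / (μ - A + a)`.
Because `μ ≥ 4αε / (1 - ρ)` the errors stay below `μ / 2`, and the limit error `L` satisfies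
`L ≤ √(1 + γ²) α ε / (1 - ρ γ)` with `γ = L / (μ - L)`. As `√(1 + γ²) < 1 + γ`, this makes
`(1 + ρ) L² - μ L + α ε μ` positive, which for `L ≤ μ / 2` puts `L` below its smaller root
`2 α ε / (1 + √(1 - 4αε/μ - 4αερ/μ))`.
-/

open Finset Filter

/-- The restricted isometry property of order `k` with constant `δ`. -/
def RIP {m d : ℕ} (Φ : Matrix (Fin m) (Fin d) ℝ) (k : ℕ) (δ : ℝ) : Prop :=
  ∀ v : Fin d → ℝ, (Finset.univ.filter fun i => v i ≠ 0).card ≤ k →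
    (1 - δ) * ∑ i, (v i) ^ 2 ≤ ∑ j, (Φ.mulVec v j) ^ 2 ∧
      ∑ j, (Φ.mulVec v j) ^ 2 ≤ (1 + δ) * ∑ i, (v i) ^ 2

open Function Matrix Topology

section EuclideanSums

variable {ι : Type*}

lemma sqrt_sum_sq_eq_norm [Fintype ι] (v : ι → ℝ) :
    √(∑ i, v i ^ 2) = ‖(WithLp.toLp 2 v : EuclideanSpace ℝ ι)‖ := by
  simp [EuclideanSpace.norm_eq]

lemma sqrt_sum_sq_sub_le [Fintype ι] (v w : ι → ℝ) :
    √(∑ i, (v i - w i) ^ 2) ≤ √(∑ i, v i ^ 2) + √(∑ i, w i ^ 2) := by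
  rw [sqrt_sum_sq_eq_norm v, sqrt_sum_sq_eq_norm w]
  exact (sqrt_sum_sq_eq_norm (v - w)).trans_le (norm_sub_le _ _)

lemma sqrt_sum_sq_sum_le [Fintype ι] {κ : Type*} (J : Finset κ) (v : κ → ι → ℝ) :
    √(∑ i, (∑ j ∈ J, v j i) ^ 2) ≤ ∑ j ∈ J, √(∑ i, v j i ^ 2) := by
  have hsum := sqrt_sum_sq_eq_norm (∑ j ∈ J, v j)
  simp only [Finset.sum_apply] at hsum
  simp only [hsum, sqrt_sum_sq_eq_norm (v _)]
  simpa only [WithLp.toLp_sum] using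
    norm_sum_le J fun j => (WithLp.toLp 2 (v j) : EuclideanSpace ℝ ι)

lemma abs_le_sqrt_sum_sq [Fintype ι] (v : ι → ℝ) (i : ι) : |v i| ≤ √(∑ j, v j ^ 2) :=
  Real.abs_le_sqrt (single_le_sum (fun j _ => sq_nonneg (v j)) (mem_univ i))

lemma sum_abs_le_sqrt_card_mul (S : Finset ι) (v : ι → ℝ) :
    ∑ i ∈ S, |v i| ≤ √(#S) * √(∑ i ∈ S, v i ^ 2) := by
  simpa [mul_comm] using Real.sum_mul_le_sqrt_mul_sqrt S (fun i => |v i|) 1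

lemma eq_zero_of_sum_sq_eq_zero [Fintype ι] {v : ι → ℝ} (hv : ∑ i, v i ^ 2 = 0) : v = 0 := by
  have := (Fintype.sum_eq_zero_iff_of_nonneg fun i => sq_nonneg (v i)).1 hv
  exact funext fun i => pow_eq_zero_iff two_ne_zero |>.1 (congrFun this i)

lemma sum_sq_indicator [Fintype ι] (S : Finset ι) (v : ι → ℝ) :
    ∑ i, (S : Set ι).indicator v i ^ 2 = ∑ i ∈ S, v i ^ 2 := by
  rw [← sum_indicator_subset _ (subset_univ S)]
  exact sum_congr rfl fun i _ => by by_cases hi : i ∈ S <;> simp [hi]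

lemma sqrt_card_mul_sqrt_sum_sq_le (v : ι → ℝ) {A B : Finset ι} (hAB : #A ≤ #B)
    (hle : ∀ a ∈ A, ∀ b ∈ B, |v a| ≤ |v b|) :
    √(#B) * √(∑ i ∈ A, v i ^ 2) ≤ ∑ i ∈ B, |v i| := by
  rcases B.eq_empty_or_nonempty with rfl | hB
  · simp [card_eq_zero.1 (Nat.le_zero.1 hAB)]
  have hBpos : (0 : ℝ) < #B := by exact_mod_cast hB.card_pos
  set c := (∑ i ∈ B, |v i|) / #B
  have hc : ∀ a ∈ A, v a ^ 2 ≤ c ^ 2 := fun a ha => by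
    have hac : |v a| ≤ c := by
      rw [le_div_iff₀ hBpos, mul_comm, ← nsmul_eq_mul, ← sum_const]
      exact sum_le_sum fun b hb => hle a ha b hb
    rw [← sq_abs]
    gcongr
  calc √(#B) * √(∑ i ∈ A, v i ^ 2) ≤ √(#B) * √(#B * c ^ 2) := by
        gcongr
        calc ∑ i ∈ A, v i ^ 2 ≤ #A * c ^ 2 := by simpa using sum_le_sum hc
          _ ≤ #B * c ^ 2 := by gcongr
    _ = ∑ i ∈ B, |v i| := by
        rw [Real.sqrt_mul hBpos.le, Real.sqrt_sq (by positivity), ← mul_assoc,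
          Real.mul_self_sqrt hBpos.le, mul_div_cancel₀ _ hBpos.ne']

end EuclideanSums

namespace RIP

variable {m d k : ℕ} {Φ : Matrix (Fin m) (Fin d) ℝ} {δ : ℝ}

lemma bounds_of_eq_zero_off (hΦ : RIP Φ k δ) {S : Finset (Fin d)} (hS : #S ≤ k)
    {v : Fin d → ℝ} (hv : ∀ i ∉ S, v i = 0) :
    (1 - δ) * ∑ i, v i ^ 2 ≤ ∑ j, (Φ *ᵥ v) j ^ 2 ∧ ∑ j, (Φ *ᵥ v) j ^ 2 ≤ (1 + δ) * ∑ i, v i ^ 2 :=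
  hΦ v <| (card_le_card fun i hi => by
    by_contra hiS
    exact (mem_filter.1 hi).2 (hv i hiS)).trans hS

/-- Polarization: `‖Φ(f + g)‖² - ‖Φ(f - g)‖² = 4 ⟨Φf, Φg⟩`, while `f ± g` both have squared norm
`‖f‖² + ‖g‖²` since the supports are disjoint. -/
lemma two_mul_dotProduct_le (hΦ : RIP Φ k δ) {S S' : Finset (Fin d)} (hk : #S + #S' ≤ k)
    (hSS' : Disjoint S S') {f g : Fin d → ℝ} (hf : ∀ i ∉ S, f i = 0) (hg : ∀ i ∉ S', g i = 0) :
    2 * ((Φ *ᵥ f) ⬝ᵥ (Φ *ᵥ g)) ≤ δ * (∑ i, f i ^ 2 + ∑ i, g i ^ 2) := by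
  have hfg : ∑ i, f i * g i = 0 := sum_eq_zero fun i _ => by
    by_cases hi : i ∈ S
    · simp [hg i (disjoint_left.1 hSS' hi)]
    · simp [hf i hi]
  have hcard : #(S ∪ S') ≤ k := (card_union_le _ _).trans hk
  have hoff : ∀ i ∉ S ∪ S', f i = 0 ∧ g i = 0 := fun i hi => by
    rw [mem_union, not_or] at hi
    exact ⟨hf i hi.1, hg i hi.2⟩
  have hplus := (bounds_of_eq_zero_off hΦ hcard (v := f + g) fun i hi => by
    simp [(hoff i hi).1, (hoff i hi).2]).2
  have hminus := (bounds_of_eq_zero_off hΦ hcard (v := f - g) fun i hi => by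
    simp [(hoff i hi).1, (hoff i hi).2]).1
  simp only [mulVec_add, mulVec_sub, Pi.add_apply, Pi.sub_apply, add_sq, sub_sq, mul_assoc,
    sum_add_distrib, sum_sub_distrib, ← mul_sum, hfg] at hplus hminus
  simp only [dotProduct]
  linarith

lemma dotProduct_le (hΦ : RIP Φ k δ) {S S' : Finset (Fin d)} (hk : #S + #S' ≤ k)
    (hSS' : Disjoint S S') {f g : Fin d → ℝ} (hf : ∀ i ∉ S, f i = 0) (hg : ∀ i ∉ S', g i = 0) :
    (Φ *ᵥ f) ⬝ᵥ (Φ *ᵥ g) ≤ δ * √(∑ i, f i ^ 2) * √(∑ i, g i ^ 2) := by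
  rcases eq_or_ne (∑ i, f i ^ 2) 0 with hF | hF
  · simp [eq_zero_of_sum_sq_eq_zero hF]
  rcases eq_or_ne (∑ i, g i ^ 2) 0 with hG | hG
  · simp [eq_zero_of_sum_sq_eq_zero hG]
  have ha : 0 < √(∑ i, f i ^ 2) := Real.sqrt_pos.2 (lt_of_le_of_ne (by positivity) hF.symm)
  have hb : 0 < √(∑ i, g i ^ 2) := Real.sqrt_pos.2 (lt_of_le_of_ne (by positivity) hG.symm)
  -- rescale so that both vectors have the same norm `‖f‖ ‖g‖`
  have hscaled := two_mul_dotProduct_le hΦ hk hSS'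
    (f := √(∑ i, g i ^ 2) • f) (g := √(∑ i, f i ^ 2) • g)
    (fun i hi => by simp [hf i hi]) (fun i hi => by simp [hg i hi])
  simp only [mulVec_smul, smul_dotProduct, dotProduct_smul, Pi.smul_apply, smul_eq_mul,
    mul_pow, ← mul_sum] at hscaled
  rw [Real.sq_sqrt (by positivity), Real.sq_sqrt (by positivity)] at hscaled
  have hFG : (∑ i, g i ^ 2) * (∑ i, f i ^ 2) =
      (√(∑ i, f i ^ 2) * √(∑ i, g i ^ 2)) ^ 2 := by
    rw [mul_pow, Real.sq_sqrt (by positivity), Real.sq_sqrt (by positivity), mul_comm]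
  refine le_of_mul_le_mul_left ?_ (mul_pos ha hb)
  linear_combination (1 / 2 : ℝ) * hscaled + δ * hFG

end RIP

section Blocks

variable {ι : Type*} [DecidableEq ι]

lemma exists_subset_card_eq_forall_le {α : Type*} [LinearOrder α] (f : ι → α) {S : Finset ι}
    {k : ℕ} (hk : k ≤ #S) : ∃ B ⊆ S, #B = k ∧ ∀ b ∈ B, ∀ i ∈ S \ B, f i ≤ f b := by
  induction k with
  | zero => exact ⟨∅, empty_subset S, card_empty, by simp⟩
  | succ k ih =>
    obtain ⟨B, hBS, hB, hmax⟩ := ih (by omega)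
    have hne : (S \ B).Nonempty := by
      rw [← card_pos, card_sdiff_of_subset hBS]
      omega
    obtain ⟨c, hc, hcmax⟩ := exists_max_image (S \ B) f hne
    refine ⟨insert c B, insert_subset (sdiff_subset hc) hBS, ?_, ?_⟩
    · rw [card_insert_of_notMem (mem_sdiff.1 hc).2, hB]
    · intro b hb i hi
      have hi' : i ∈ S \ B := sdiff_subset_sdiff subset_rfl (subset_insert c B) hi
      rcases mem_insert.1 hb with rfl | hb
      · exact hcmax i hi'
      · exact hmax b hb i hi'

lemma biUnion_range_add_one' {α : Type*} [DecidableEq α] (f : ℕ → Finset α) (n : ℕ) :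
    (range (n + 1)).biUnion f = f 0 ∪ (range n).biUnion fun j => f (j + 1) := by
  induction n with
  | zero => simp
  | succ n ih =>
    rw [range_add_one, biUnion_insert, ih, range_add_one, biUnion_insert, union_left_comm]

/-- The splitting `T₁, T₂, …` of `S = T₀ᶜ` in Candès' proof (`B j = T_{j+1}`): blocks of at most
`s` indices in order of decreasing `|h i|`. Of the ordering only its consequence
`√s ‖h_{B (j+1)}‖₂ ≤ ‖h_{B j}‖₁` is recorded. -/
structure IsBlockDecomposition (s : ℕ) (h : ι → ℝ) (S : Finset ι) (n : ℕ) (B : ℕ → Finset ι) :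
    Prop where
  subset : ∀ j, B j ⊆ S
  pairwise_disjoint : Pairwise (Disjoint on B)
  card_le : ∀ j, #(B j) ≤ s
  union_biUnion_eq : B 0 ∪ (range n).biUnion (fun j => B (j + 1)) = S
  sqrt_mul_le : ∀ j, √s * √(∑ i ∈ B (j + 1), h i ^ 2) ≤ ∑ i ∈ B j, |h i|

variable {s n : ℕ} {h : ι → ℝ} {S : Finset ι} {B : ℕ → Finset ι}

lemma isBlockDecomposition_of_card_le (hS : #S ≤ s) :
    IsBlockDecomposition s h S 0 (fun j => if j = 0 then S else ∅) where
  subset j := by split_ifs <;> simp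
  pairwise_disjoint i j hij := by
    rcases i with _ | i <;> rcases j with _ | j <;> simp_all [onFun]
  card_le j := by split_ifs <;> simp [hS]
  union_biUnion_eq := by simp
  sqrt_mul_le j := by simpa using sum_nonneg fun i _ => abs_nonneg (h i)

lemma IsBlockDecomposition.cons {B₀ : Finset ι} (hB₀S : B₀ ⊆ S) (hB₀ : #B₀ = s)
    (hmax : ∀ b ∈ B₀, ∀ i ∈ S \ B₀, |h i| ≤ |h b|) (hB : IsBlockDecomposition s h (S \ B₀) n B) :
    IsBlockDecomposition s h S (n + 1) (fun j => if j = 0 then B₀ else B (j - 1)) where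
  subset j := by
    split_ifs
    · exact hB₀S
    · exact (hB.subset _).trans sdiff_subset
  pairwise_disjoint i j hij := by
    have hdisj : ∀ j, Disjoint B₀ (B j) := fun j =>
      disjoint_of_subset_right (hB.subset j) disjoint_sdiff
    rcases i with _ | i <;> rcases j with _ | j
    · exact absurd rfl hij
    · simpa [onFun] using hdisj j
    · simpa [onFun] using (hdisj i).symm
    · simpa [onFun] using hB.pairwise_disjoint (by omega : i ≠ j)
  card_le j := by
    split_ifs
    · exact hB₀.le
    · exact hB.card_le _
  union_biUnion_eq := by
    simp only [↓reduceIte, add_eq_zero, one_ne_zero, and_false, add_tsub_cancel_right]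
    rw [biUnion_range_add_one', hB.union_biUnion_eq, union_sdiff_of_subset hB₀S]
  sqrt_mul_le j := by
    rcases j with _ | j
    · simpa [← hB₀] using sqrt_card_mul_sqrt_sum_sq_le h ((hB.card_le 0).trans hB₀.ge)
        fun a ha b hb => hmax b hb a (hB.subset 0 ha)
    · simpa using hB.sqrt_mul_le j

lemma exists_isBlockDecomposition (hs : 0 < s) (h : ι → ℝ) (S : Finset ι) :
    ∃ n B, IsBlockDecomposition s h S n B := by
  induction S using Finset.strongInduction with
  | H S ih =>
    by_cases hS : #S ≤ s
    · exact ⟨0, _, isBlockDecomposition_of_card_le hS⟩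
    obtain ⟨B₀, hB₀S, hB₀, hmax⟩ := exists_subset_card_eq_forall_le (fun i => |h i|) (S := S)
      (k := s) (by omega)
    have hB₀ne : B₀.Nonempty := card_pos.1 (hB₀ ▸ hs)
    obtain ⟨n, B, hB⟩ := ih (S \ B₀) (sdiff_ssubset hB₀S hB₀ne)
    exact ⟨n + 1, _, hB.cons hB₀S hB₀ hmax⟩

lemma IsBlockDecomposition.sqrt_mul_sum_le (hB : IsBlockDecomposition s h S n B) :
    √s * ∑ j ∈ range n, √(∑ i ∈ B (j + 1), h i ^ 2) ≤ ∑ i ∈ S, |h i| := by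
  calc √s * ∑ j ∈ range n, √(∑ i ∈ B (j + 1), h i ^ 2)
      ≤ ∑ j ∈ range n, ∑ i ∈ B j, |h i| := by
        rw [mul_sum]
        exact sum_le_sum fun j _ => hB.sqrt_mul_le j
    _ = ∑ i ∈ (range n).biUnion B, |h i| :=
        (sum_biUnion fun i _ j _ hij => hB.pairwise_disjoint hij).symm
    _ ≤ ∑ i ∈ S, |h i| :=
        sum_le_sum_of_subset_of_nonneg (biUnion_subset.2 fun j _ => hB.subset j)
          fun i _ _ => abs_nonneg (h i)

lemma IsBlockDecomposition.indicator_sdiff_eq_sum (hB : IsBlockDecomposition s h S n B) :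
    ((S \ B 0 : Finset ι) : Set ι).indicator h =
      ∑ j ∈ range n, ((B (j + 1) : Finset ι) : Set ι).indicator h := by
  have htail : S \ B 0 = (range n).biUnion (fun j => B (j + 1)) := by
    rw [← hB.union_biUnion_eq, union_sdiff_cancel_left]
    exact (disjoint_biUnion_right _ _ _).2 fun j _ => hB.pairwise_disjoint (by omega)
  rw [htail, coe_biUnion]
  simp only [mem_coe]
  rw [indicator_biUnion _ _ fun i _ j _ hij =>
    disjoint_coe.2 (hB.pairwise_disjoint (by simpa using hij))]
  ext i
  simp

end Blocks

section ConeBlocks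

variable {ι : Type*} [Fintype ι] [DecidableEq ι] {s n : ℕ} {h : ι → ℝ} {T : Finset ι}
  {B : ℕ → Finset ι}

lemma IsBlockDecomposition.sum_tail_le_of_cone (hB : IsBlockDecomposition s h Tᶜ n B)
    (hs : 0 < s) (hT : #T ≤ s) {γ : ℝ} (hγ : 0 ≤ γ)
    (hcone : ∑ i ∈ Tᶜ, |h i| ≤ γ * ∑ i ∈ T, |h i|) :
    ∑ j ∈ range n, √(∑ i ∈ B (j + 1), h i ^ 2) ≤ γ * √(∑ i ∈ T ∪ B 0, h i ^ 2) := by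
  have hsqrt_s : 0 < √(s : ℝ) := Real.sqrt_pos.2 (by exact_mod_cast hs)
  refine le_of_mul_le_mul_left ?_ hsqrt_s
  calc √s * ∑ j ∈ range n, √(∑ i ∈ B (j + 1), h i ^ 2) ≤ ∑ i ∈ Tᶜ, |h i| := hB.sqrt_mul_sum_le
    _ ≤ γ * ∑ i ∈ T, |h i| := hcone
    _ ≤ γ * (√(#T) * √(∑ i ∈ T, h i ^ 2)) := by gcongr; exact sum_abs_le_sqrt_card_mul T h
    _ ≤ γ * (√s * √(∑ i ∈ T ∪ B 0, h i ^ 2)) := by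
        gcongr
        exact subset_union_left
    _ = √s * (γ * √(∑ i ∈ T ∪ B 0, h i ^ 2)) := by ring

lemma IsBlockDecomposition.indicator_compl_union_eq_sum (hB : IsBlockDecomposition s h Tᶜ n B) :
    (((T ∪ B 0)ᶜ : Finset ι) : Set ι).indicator h =
      ∑ j ∈ range n, ((B (j + 1) : Finset ι) : Set ι).indicator h := by
  rw [← hB.indicator_sdiff_eq_sum]
  congr
  ext
  simp

lemma IsBlockDecomposition.sum_sq_le (hB : IsBlockDecomposition s h Tᶜ n B) :
    ∑ i, h i ^ 2 ≤
      ∑ i ∈ T ∪ B 0, h i ^ 2 + (∑ j ∈ range n, √(∑ i ∈ B (j + 1), h i ^ 2)) ^ 2 := by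
  rw [← sum_add_sum_compl (T ∪ B 0), ← sum_sq_indicator (T ∪ B 0)ᶜ,
    hB.indicator_compl_union_eq_sum]
  gcongr
  simp only [Finset.sum_apply]
  rw [← Real.sqrt_le_left (by positivity)]
  simpa only [sum_sq_indicator] using
    sqrt_sum_sq_sum_le (range n) fun j => ((B (j + 1) : Finset ι) : Set ι).indicator h

end ConeBlocks

lemma sqrt_add_sqrt_le_sqrt_two_mul {a b : ℝ} (ha : 0 ≤ a) (hb : 0 ≤ b) :
    √a + √b ≤ √2 * √(a + b) := by
  rw [← Real.sqrt_mul zero_le_two]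
  refine Real.le_sqrt_of_sq_le ?_
  nlinarith [sq_nonneg (√a - √b), Real.sq_sqrt ha, Real.sq_sqrt hb]

namespace RIP

variable {m d s n : ℕ} {Φ : Matrix (Fin m) (Fin d) ℝ} {δ : ℝ} {T : Finset (Fin d)}
  {h : Fin d → ℝ} {B : ℕ → Finset (Fin d)}

lemma neg_indicator_union_dotProduct_le (hΦ : RIP Φ (2 * s) δ) (hδ : 0 ≤ δ)
    {T₀ T₁ T₂ : Finset (Fin d)} (hT₀ : #T₀ ≤ s) (hT₁ : #T₁ ≤ s) (hT₂ : #T₂ ≤ s)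
    (h₀₁ : Disjoint T₀ T₁) (h₀₂ : Disjoint T₀ T₂) (h₁₂ : Disjoint T₁ T₂) :
    (Φ *ᵥ -((T₀ ∪ T₁ : Finset (Fin d)) : Set (Fin d)).indicator h) ⬝ᵥ
        (Φ *ᵥ (T₂ : Set (Fin d)).indicator h) ≤
      √2 * δ * √(∑ i ∈ T₀ ∪ T₁, h i ^ 2) * √(∑ i ∈ T₂, h i ^ 2) := by
  have hcross : ∀ {S : Finset (Fin d)}, #S ≤ s → Disjoint S T₂ →
      (Φ *ᵥ -(S : Set (Fin d)).indicator h) ⬝ᵥ (Φ *ᵥ (T₂ : Set (Fin d)).indicator h) ≤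
        δ * √(∑ i ∈ S, h i ^ 2) * √(∑ i ∈ T₂, h i ^ 2) := fun {S} hS hST₂ => by
    have := dotProduct_le hΦ (by omega) hST₂ (f := -(S : Set (Fin d)).indicator h)
      (g := (T₂ : Set (Fin d)).indicator h) (fun i hi => by simp [hi]) (fun i hi => by simp [hi])
    simpa only [Pi.neg_apply, neg_sq, sum_sq_indicator] using this
  rw [coe_union, Set.indicator_union_of_disjoint (disjoint_coe.2 h₀₁), ← Pi.add_def, neg_add,
    mulVec_add, add_dotProduct, sum_union h₀₁]
  calc _ ≤ δ * √(∑ i ∈ T₀, h i ^ 2) * √(∑ i ∈ T₂, h i ^ 2) +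
        δ * √(∑ i ∈ T₁, h i ^ 2) * √(∑ i ∈ T₂, h i ^ 2) :=
        add_le_add (hcross hT₀ h₀₂) (hcross hT₁ h₁₂)
    _ = δ * (√(∑ i ∈ T₀, h i ^ 2) + √(∑ i ∈ T₁, h i ^ 2)) * √(∑ i ∈ T₂, h i ^ 2) := by ring
    _ ≤ δ * (√2 * √(∑ i ∈ T₀, h i ^ 2 + ∑ i ∈ T₁, h i ^ 2)) * √(∑ i ∈ T₂, h i ^ 2) := by
        gcongr
        exact sqrt_add_sqrt_le_sqrt_two_mul (by positivity) (by positivity)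
    _ = _ := by ring

lemma sqrt_sum_sq_head_le (hΦ : RIP Φ (2 * s) δ) (hδ : 0 ≤ δ) (hT : #T ≤ s)
    (hB : IsBlockDecomposition s h Tᶜ n B) :
    (1 - δ) * √(∑ i ∈ T ∪ B 0, h i ^ 2) ≤
      √(1 + δ) * √(∑ j, (Φ *ᵥ h) j ^ 2) +
        √2 * δ * ∑ j ∈ range n, √(∑ i ∈ B (j + 1), h i ^ 2) := by
  have hTB : ∀ j, Disjoint T (B j) := fun j =>
    disjoint_of_subset_right (hB.subset j) disjoint_compl_right
  set hU := ((T ∪ B 0 : Finset (Fin d)) : Set (Fin d)).indicator h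
  set N := √(∑ i ∈ T ∪ B 0, h i ^ 2)
  set t := fun j => ((B (j + 1) : Finset (Fin d)) : Set (Fin d)).indicator h
  have hΦh : Φ *ᵥ h = Φ *ᵥ hU + ∑ j ∈ range n, Φ *ᵥ t j := by
    rw [← mulVec_sum, ← mulVec_add, ← hB.indicator_compl_union_eq_sum, coe_compl,
      Set.indicator_self_add_compl]
  obtain ⟨hlow, hup⟩ := bounds_of_eq_zero_off hΦ (S := T ∪ B 0)
    ((card_union_le _ _).trans (by linarith [hB.card_le 0])) (v := hU)
    fun i hi => Set.indicator_of_notMem (mem_coe.not.2 hi) h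
  rw [sum_sq_indicator] at hlow hup
  have hΦhU : √(∑ j, (Φ *ᵥ hU) j ^ 2) ≤ √(1 + δ) * N := by
    rw [← Real.sqrt_mul (by linarith)]
    exact Real.sqrt_le_sqrt hup
  have key : (1 - δ) * N ^ 2 ≤
      N * (√(1 + δ) * √(∑ j, (Φ *ᵥ h) j ^ 2) +
        √2 * δ * ∑ j ∈ range n, √(∑ i ∈ B (j + 1), h i ^ 2)) :=
    calc (1 - δ) * N ^ 2 = (1 - δ) * ∑ i ∈ T ∪ B 0, h i ^ 2 := by rw [Real.sq_sqrt (by positivity)]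
      _ ≤ (Φ *ᵥ hU) ⬝ᵥ (Φ *ᵥ hU) := by simpa [dotProduct, sq] using hlow
      _ = (Φ *ᵥ hU) ⬝ᵥ (Φ *ᵥ h) + ∑ j ∈ range n, (Φ *ᵥ -hU) ⬝ᵥ (Φ *ᵥ t j) := by
        rw [hΦh, dotProduct_add, dotProduct_sum]
        simp [mulVec_neg, sum_neg_distrib]
      _ ≤ √(1 + δ) * N * √(∑ j, (Φ *ᵥ h) j ^ 2) +
          ∑ j ∈ range n, √2 * δ * N * √(∑ i ∈ B (j + 1), h i ^ 2) := by
        gcongr with j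
        · exact (Real.sum_mul_le_sqrt_mul_sqrt _ _ _).trans (by gcongr)
        · exact neg_indicator_union_dotProduct_le hΦ hδ hT (hB.card_le 0) (hB.card_le _)
            (hTB 0) (hTB _) (hB.pairwise_disjoint (by omega))
      _ = _ := by rw [← mul_sum]; ring
  rcases (show 0 ≤ N from Real.sqrt_nonneg _).eq_or_lt with hN | hN
  · rw [← hN, mul_zero]
    positivity
  · nlinarith

theorem sqrt_sum_sq_le_of_cone (hs : 0 < s) (hΦ : RIP Φ (2 * s) δ) (hδ0 : 0 ≤ δ) (hδ1 : δ < 1)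
    {ρ α : ℝ} (hρ : ρ = √2 * δ / (1 - δ)) (hα : α = 2 * √(1 + δ) / (1 - δ)) (hT : #T ≤ s)
    {γ ε : ℝ} (hγ : 0 ≤ γ) (hργ : ρ * γ < 1) (hcone : ∑ i ∈ Tᶜ, |h i| ≤ γ * ∑ i ∈ T, |h i|)
    (htube : √(∑ j, (Φ *ᵥ h) j ^ 2) ≤ 2 * ε) :
    √(∑ i, h i ^ 2) ≤ √(1 + γ ^ 2) * (α * ε) / (1 - ρ * γ) := by
  obtain ⟨n, B, hB⟩ := exists_isBlockDecomposition hs h Tᶜ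
  set N := √(∑ i ∈ T ∪ B 0, h i ^ 2)
  set τ := ∑ j ∈ range n, √(∑ i ∈ B (j + 1), h i ^ 2)
  have htail : τ ≤ γ * N := hB.sum_tail_le_of_cone hs hT hγ hcone
  have hhead : (1 - δ) * N ≤ √(1 + δ) * √(∑ j, (Φ *ᵥ h) j ^ 2) + √2 * δ * τ :=
    sqrt_sum_sq_head_le hΦ hδ0 hT hB
  have hδ1' : 0 < 1 - δ := by linarith
  have hρδ : ρ * (1 - δ) = √2 * δ := by rw [hρ]; field_simp
  have hαδ : α * (1 - δ) = 2 * √(1 + δ) := by rw [hα]; field_simp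
  have hN : N ≤ α * ε / (1 - ρ * γ) := by
    rw [le_div_iff₀ (by linarith)]
    refine le_of_mul_le_mul_left ?_ hδ1'
    calc (1 - δ) * (N * (1 - ρ * γ)) = (1 - δ) * N - ρ * (1 - δ) * γ * N := by ring
      _ = (1 - δ) * N - √2 * δ * (γ * N) := by rw [hρδ]; ring
      _ ≤ √(1 + δ) * (2 * ε) := by
        have := mul_le_mul_of_nonneg_left htail (by positivity : 0 ≤ √2 * δ)
        have := mul_le_mul_of_nonneg_left htube (Real.sqrt_nonneg (1 + δ))
        linarith
      _ = (1 - δ) * (α * ε) := by linear_combination (-ε) * hαδ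
  have hτ : τ ^ 2 ≤ γ ^ 2 * N ^ 2 := by
    rw [← mul_pow]
    exact pow_le_pow_left₀ (sum_nonneg fun j _ => Real.sqrt_nonneg _) htail 2
  calc √(∑ i, h i ^ 2) ≤ √((1 + γ ^ 2) * N ^ 2) := by
        gcongr
        have := hB.sum_sq_le
        rw [← Real.sq_sqrt (by positivity : 0 ≤ ∑ i ∈ T ∪ B 0, h i ^ 2)] at this
        linarith
    _ = √(1 + γ ^ 2) * N := by rw [Real.sqrt_mul (by positivity), Real.sqrt_sq (Real.sqrt_nonneg _)]
    _ ≤ √(1 + γ ^ 2) * (α * ε / (1 - ρ * γ)) := by gcongr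
    _ = √(1 + γ ^ 2) * (α * ε) / (1 - ρ * γ) := mul_div_assoc' ..

end RIP

lemma sum_compl_abs_sub_le_of_weighted_min {ι : Type*} [Fintype ι] [DecidableEq ι]
    {T : Finset ι} {x v c : ι → ℝ} (hx : ∀ i ∉ T, x i = 0) (hc : ∀ i, 0 < c i)
    (hmin : ∑ i, |v i| / c i ≤ ∑ i, |x i| / c i) {lo hi : ℝ} (hlo0 : 0 ≤ lo)
    (hlo : ∀ i ∉ T, c i ≤ lo) (hhi0 : 0 < hi) (hhi : ∀ i ∈ T, hi ≤ c i) :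
    ∑ i ∈ Tᶜ, |v i - x i| ≤ lo / hi * ∑ i ∈ T, |v i - x i| := by
  have hweighted : ∑ i ∈ Tᶜ, |v i - x i| / c i ≤ ∑ i ∈ T, |v i - x i| / c i := by
    have hoff : ∑ i ∈ Tᶜ, |v i - x i| / c i = ∑ i ∈ Tᶜ, |v i| / c i - ∑ i ∈ Tᶜ, |x i| / c i := by
      rw [← sum_sub_distrib]
      exact sum_congr rfl fun i hi => by simp [hx i (mem_compl.1 hi)]
    have hon : ∑ i ∈ T, (|x i| / c i - |v i| / c i) ≤ ∑ i ∈ T, |v i - x i| / c i :=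
      sum_le_sum fun i _ => by
        rw [← sub_div, abs_sub_comm]
        gcongr
        · exact (hc i).le
        · exact abs_sub_abs_le_abs_sub _ _
    rw [← sum_add_sum_compl T, ← sum_add_sum_compl T fun i => |x i| / c i] at hmin
    rw [sum_sub_distrib] at hon
    linarith
  calc ∑ i ∈ Tᶜ, |v i - x i| ≤ ∑ i ∈ Tᶜ, lo * (|v i - x i| / c i) := sum_le_sum fun i hi => by
        rw [← mul_div_assoc, le_div_iff₀ (hc i), mul_comm]
        gcongr
        exact hlo i (mem_compl.1 hi)
    _ ≤ lo * ∑ i ∈ T, |v i - x i| / c i := by rw [← mul_sum]; gcongr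
    _ ≤ lo * ∑ i ∈ T, |v i - x i| / hi := by
        gcongr with i hi
        exact hhi i hi
    _ = lo / hi * ∑ i ∈ T, |v i - x i| := by rw [← sum_div]; ring

lemma sqrt_sum_sq_mulVec_sub_le {κ ι : Type*} [Fintype κ] [Fintype ι] {Φ : Matrix κ ι ℝ}
    {u : κ → ℝ} {ε : ℝ} {v w : ι → ℝ} (hv : √(∑ j, ((Φ *ᵥ v) j - u j) ^ 2) ≤ ε)
    (hw : √(∑ j, ((Φ *ᵥ w) j - u j) ^ 2) ≤ ε) :
    √(∑ j, (Φ *ᵥ (v - w)) j ^ 2) ≤ 2 * ε := by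
  have := sqrt_sum_sq_sub_le (fun j => (Φ *ᵥ v) j - u j) (fun j => (Φ *ᵥ w) j - u j)
  simp only [sub_sub_sub_cancel_right] at this
  simp only [mulVec_sub, Pi.sub_apply]
  linarith

namespace RIP

variable {m d s : ℕ} {Φ : Matrix (Fin m) (Fin d) ℝ} {δ ρ α ε : ℝ} {T : Finset (Fin d)}
  {x v : Fin d → ℝ} {u : Fin m → ℝ}

lemma error_le_of_cone (hs : 0 < s) (hΦ : RIP Φ (2 * s) δ) (hδ0 : 0 ≤ δ) (hδ1 : δ < 1)
    (hρ : ρ = √2 * δ / (1 - δ)) (hα : α = 2 * √(1 + δ) / (1 - δ)) (hT : #T ≤ s)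
    (hx_feas : √(∑ j, ((Φ *ᵥ x) j - u j) ^ 2) ≤ ε) (hv_feas : √(∑ j, ((Φ *ᵥ v) j - u j) ^ 2) ≤ ε)
    {γ : ℝ} (hγ : 0 ≤ γ) (hργ : ρ * γ < 1)
    (hcone : ∑ i ∈ Tᶜ, |v i - x i| ≤ γ * ∑ i ∈ T, |v i - x i|) :
    √(∑ i, (x i - v i) ^ 2) ≤ √(1 + γ ^ 2) * (α * ε) / (1 - ρ * γ) := by
  have := sqrt_sum_sq_le_of_cone hs hΦ hδ0 hδ1 hρ hα hT hγ hργ (h := v - x) hcone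
    (sqrt_sum_sq_mulVec_sub_le hv_feas hx_feas)
  simpa only [Pi.sub_apply, ← neg_sub (x _), neg_sq] using this

lemma error_le_of_l1_min (hs : 0 < s) (hΦ : RIP Φ (2 * s) δ) (hδ0 : 0 ≤ δ) (hδ1 : δ < 1)
    (hρ : ρ = √2 * δ / (1 - δ)) (hα : α = 2 * √(1 + δ) / (1 - δ)) (hρ1 : ρ < 1) (hT : #T ≤ s)
    (hx : ∀ i ∉ T, x i = 0) (hx_feas : √(∑ j, ((Φ *ᵥ x) j - u j) ^ 2) ≤ ε)
    (hv_feas : √(∑ j, ((Φ *ᵥ v) j - u j) ^ 2) ≤ ε) (hv_min : ∑ i, |v i| ≤ ∑ i, |x i|) :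
    √(∑ i, (x i - v i) ^ 2) ≤ √2 * (α * ε) / (1 - ρ) := by
  have hcone : ∑ i ∈ Tᶜ, |v i - x i| ≤ 1 * ∑ i ∈ T, |v i - x i| := by
    simpa using sum_compl_abs_sub_le_of_weighted_min hx (c := 1) (fun _ => one_pos) (by simpa)
      zero_le_one (fun _ _ => le_rfl) one_pos (fun _ _ => le_rfl)
  simpa [one_add_one_eq_two] using
    error_le_of_cone hs hΦ hδ0 hδ1 hρ hα hT hx_feas hv_feas zero_le_one (by linarith) hcone

lemma error_le_of_reweighted_l1_min (hs : 0 < s) (hΦ : RIP Φ (2 * s) δ) (hδ0 : 0 ≤ δ)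
    (hδ1 : δ < 1) (hρ : ρ = √2 * δ / (1 - δ)) (hα : α = 2 * √(1 + δ) / (1 - δ)) (hρ1 : ρ < 1)
    (hT : #T ≤ s) (hx : ∀ i ∉ T, x i = 0) {μ : ℝ} (hμ : ∀ i ∈ T, μ ≤ |x i|)
    (hx_feas : √(∑ j, ((Φ *ᵥ x) j - u j) ^ 2) ≤ ε) {y : Fin d → ℝ} {A a : ℝ} (hA0 : 0 ≤ A)
    (hyx : ∀ i, |x i - y i| ≤ A) (hA : A ≤ μ / 2) (ha : 0 < a)
    (hv_feas : √(∑ j, ((Φ *ᵥ v) j - u j) ^ 2) ≤ ε)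
    (hv_min : ∑ i, |v i| / (|y i| + a) ≤ ∑ i, |x i| / (|y i| + a)) :
    √(∑ i, (x i - v i) ^ 2) ≤
      √(1 + ((A + a) / (μ - A + a)) ^ 2) * (α * ε) / (1 - ρ * ((A + a) / (μ - A + a))) := by
  have hρ0 : 0 ≤ ρ := hρ ▸ div_nonneg (by positivity) (by linarith)
  have hden : 0 < μ - A + a := by linarith
  have hγ1 : (A + a) / (μ - A + a) ≤ 1 := (div_le_one hden).2 (by linarith)
  refine error_le_of_cone hs hΦ hδ0 hδ1 hρ hα hT hx_feas hv_feas (by positivity) (by nlinarith) ?_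
  refine sum_compl_abs_sub_le_of_weighted_min hx (fun i => by positivity) hv_min (by linarith)
    (fun i hi => ?_) hden (fun i hi => ?_)
  · have := hyx i
    rw [hx i hi, zero_sub, abs_neg] at this
    linarith
  · linarith [hyx i, hμ i hi, abs_sub_abs_le_abs_sub (x i) (y i)]

end RIP

section FixedPoint

variable {ρ β μ : ℝ}

lemma sqrt_one_add_sq_mul_div_le_half (hρ0 : 0 ≤ ρ) (hρ1 : ρ < 1) (hβ : 0 ≤ β)
    (hμ : 4 * β / (1 - ρ) ≤ μ) {γ : ℝ} (hγ0 : 0 ≤ γ) (hγ1 : γ ≤ 1) :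
    √(1 + γ ^ 2) * β / (1 - ρ * γ) ≤ μ / 2 := by
  have hρ1' : 0 < 1 - ρ := by linarith
  have hsqrt : √(1 + γ ^ 2) ≤ 2 := by
    rw [Real.sqrt_le_left zero_le_two]
    nlinarith
  calc √(1 + γ ^ 2) * β / (1 - ρ * γ) ≤ 2 * β / (1 - ρ) := by
        gcongr
        nlinarith
    _ = 4 * β / (1 - ρ) / 2 := by ring
    _ ≤ μ / 2 := by gcongr

lemma sq_le_discriminant (hρ0 : 0 ≤ ρ) (hρ1 : ρ < 1) (hβ : 0 < β) (hμ : 4 * β / (1 - ρ) ≤ μ) :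
    ρ ^ 2 ≤ 1 - 4 * β / μ - 4 * β * ρ / μ := by
  have hρ1' : 0 < 1 - ρ := by linarith
  have hμ0 : 0 < μ := lt_of_lt_of_le (by positivity) hμ
  rw [div_le_iff₀ hρ1'] at hμ
  have : 4 * β / μ + 4 * β * ρ / μ ≤ 1 - ρ ^ 2 := by
    rw [← add_div, div_le_iff₀ hμ0]
    nlinarith
  linarith

lemma quadratic_pos_of_le_fixed_point (hβ : 0 < β) {L : ℝ} (hL0 : 0 ≤ L) (hLμ : L < μ)
    (hρL : ρ * (L / (μ - L)) < 1)
    (hfix : L ≤ √(1 + (L / (μ - L)) ^ 2) * β / (1 - ρ * (L / (μ - L)))) :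
    0 < (1 + ρ) * L ^ 2 - μ * L + β * μ := by
  rcases hL0.eq_or_lt with rfl | hLpos
  · nlinarith
  set γ := L / (μ - L)
  have hμL : 0 < μ - L := by linarith
  have hγ : γ * (μ - L) = L := div_mul_cancel₀ L hμL.ne'
  have hsqrt : √(1 + γ ^ 2) < 1 + γ := by
    have hγ0 : 0 < γ := div_pos hLpos hμL
    rw [Real.sqrt_lt' (by positivity)]
    nlinarith
  rw [le_div_iff₀ (by linarith)] at hfix
  have hlt : L * (1 - ρ * γ) < (1 + γ) * β := hfix.trans_lt (by gcongr)
  -- multiplying by `μ - L` turns `γ` back into `L`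
  linear_combination mul_lt_mul_of_pos_right hlt hμL + (β + ρ * L) * hγ

lemma lt_smaller_root_of_quadratic_pos (hρ0 : 0 ≤ ρ) (hρ1 : ρ < 1) (hβ : 0 < β)
    (hμ : 4 * β / (1 - ρ) ≤ μ) {L : ℝ} (hL : L ≤ μ / 2)
    (hq : 0 < (1 + ρ) * L ^ 2 - μ * L + β * μ) :
    L < 2 * β / (1 + √(1 - 4 * β / μ - 4 * β * ρ / μ)) := by
  have hρ1' : 0 < 1 - ρ := by linarith
  have hμ0 : 0 < μ := lt_of_lt_of_le (by positivity) hμ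
  have hdisc := sq_le_discriminant hρ0 hρ1 hβ hμ
  set t := √(1 - 4 * β / μ - 4 * β * ρ / μ)
  have hρt : ρ ≤ t := Real.le_sqrt_of_sq_le hdisc
  have ht : μ * (1 - t ^ 2) = 4 * β * (1 + ρ) := by
    rw [Real.sq_sqrt ((sq_nonneg ρ).trans hdisc)]
    field_simp
    ring
  -- `4 (1 + ρ)` times the quadratic is `(μ - 2 (1 + ρ) L)² - (μ t)²`; `L ≤ μ / 2` rules out the
  -- branch beyond the larger root
  have hsq : (μ * t) ^ 2 < (μ - 2 * (1 + ρ) * L) ^ 2 := by nlinarith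
  have hlt : 2 * (1 + ρ) * L < μ * (1 - t) := by
    have habs := sq_lt_sq.1 hsq
    rw [abs_of_nonneg (by positivity)] at habs
    rcases lt_abs.1 habs with h | h
    · linarith
    · nlinarith [mul_le_mul_of_nonneg_left hρt hμ0.le]
  rw [lt_div_iff₀ (by linarith)]
  nlinarith

lemma limit_lt_smaller_root {L : ℝ} {E a : ℕ → ℝ} (hρ0 : 0 ≤ ρ) (hρ1 : ρ < 1)
    (hβ : 0 < β) (hμ : 4 * β / (1 - ρ) ≤ μ) (hE : ∀ k, 0 ≤ E k) (ha : ∀ k, 0 < a k)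
    (ha0 : Tendsto a atTop (𝓝 0)) (hEL : Tendsto E atTop (𝓝 L)) (hE0 : E 0 ≤ μ / 2)
    (hstep : ∀ k, E k ≤ μ / 2 →
      E (k + 1) ≤ √(1 + ((E k + a k) / (μ - E k + a k)) ^ 2) * β /
        (1 - ρ * ((E k + a k) / (μ - E k + a k)))) :
    L < 2 * β / (1 + √(1 - 4 * β / μ - 4 * β * ρ / μ)) := by
  have hρ1' : 0 < 1 - ρ := by linarith
  have hμ0 : 0 < μ := lt_of_lt_of_le (by positivity) hμ
  have hratio : ∀ {A b : ℝ}, 0 ≤ A → A ≤ μ / 2 → 0 ≤ b →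
      0 ≤ (A + b) / (μ - A + b) ∧ (A + b) / (μ - A + b) ≤ 1 := fun hA0 hA hb =>
    ⟨div_nonneg (by linarith) (by linarith), div_le_one_of_le₀ (by linarith) (by linarith)⟩
  have hall : ∀ k, E k ≤ μ / 2 := by
    intro k
    induction k with
    | zero => exact hE0
    | succ k ih =>
      obtain ⟨hγ0, hγ1⟩ := hratio (hE k) ih (ha k).le
      exact (hstep k ih).trans (sqrt_one_add_sq_mul_div_le_half hρ0 hρ1 hβ.le hμ hγ0 hγ1)
  have hL0 : 0 ≤ L := ge_of_tendsto' hEL hE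
  have hL : L ≤ μ / 2 := le_of_tendsto' hEL hall
  obtain ⟨-, hγL⟩ := hratio hL0 hL le_rfl
  simp only [add_zero] at hγL
  have hργL : ρ * (L / (μ - L)) < 1 := by nlinarith
  have hγ : Tendsto (fun k => (E k + a k) / (μ - E k + a k)) atTop (𝓝 (L / (μ - L))) := by
    have := (hEL.add ha0).div ((tendsto_const_nhds (x := μ) |>.sub hEL).add ha0)
      (ne_of_gt (by linarith))
    rwa [add_zero, add_zero] at this
  have hF : ContinuousAt (fun γ => √(1 + γ ^ 2) * β / (1 - ρ * γ)) (L / (μ - L)) :=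
    ContinuousAt.div (by fun_prop) (by fun_prop) (by linarith)
  have hfix : L ≤ √(1 + (L / (μ - L)) ^ 2) * β / (1 - ρ * (L / (μ - L))) :=
    le_of_tendsto_of_tendsto' (hEL.comp (tendsto_add_atTop_nat 1)) (hF.tendsto.comp hγ)
      fun k => hstep k (hall k)
  exact lt_smaller_root_of_quadratic_pos hρ0 hρ1 hβ hμ hL
    (quadratic_pos_of_le_fixed_point hβ hL0 (by linarith) hργL hfix)

end FixedPoint

lemma sqrt_two_mul_div_one_sub_lt_one {δ : ℝ} (hδ : δ < √2 - 1) : √2 * δ / (1 - δ) < 1 := by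
  rw [div_lt_one (by linarith [Real.sqrt_two_lt_three_halves])]
  nlinarith [Real.sq_sqrt zero_le_two, mul_lt_mul_of_pos_right hδ (by positivity : 0 < √2 + 1)]

theorem reweighted_l1_sparse_case_general
    (m d s : ℕ) (hs : 0 < s)
    (Φ : Matrix (Fin m) (Fin d) ℝ) (δ : ℝ)
    (hδ0 : 0 < δ) (hδ : δ < Real.sqrt 2 - 1)
    (hRIP : RIP Φ (2 * s) δ)
    (ρ α : ℝ)
    (hρ : ρ = Real.sqrt 2 * δ / (1 - δ))
    (hα : α = 2 * Real.sqrt (1 + δ) / (1 - δ))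
    (x : Fin d → ℝ)
    (hxs : (Finset.univ.filter fun i => x i ≠ 0).card ≤ s)
    (e : Fin m → ℝ) (ε : ℝ) (hε : 0 < ε)
    (he : Real.sqrt (∑ j, (e j) ^ 2) ≤ ε)
    (u : Fin m → ℝ) (hu : u = Φ.mulVec x + e)
    (μ : ℝ) (hμmin : ∀ i, x i ≠ 0 → μ ≤ |x i|)
    (hμ : μ ≥ 4 * α * ε / (1 - ρ))
    -- the iteratively reweighted ℓ1 algorithm: iterates `X k` with stability
    -- parameters `a k → 0`, `a k > 0`
    (X : ℕ → Fin d → ℝ) (a : ℕ → ℝ) (ha : ∀ k, 0 < a k)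
    (ha0 : Tendsto a atTop (nhds 0))
    -- initial step: weights all equal to one (standard ℓ1-minimization)
    (hX0feas : Real.sqrt (∑ j, (Φ.mulVec (X 0) j - u j) ^ 2) ≤ ε)
    (hX0min : ∀ v : Fin d → ℝ, Real.sqrt (∑ j, (Φ.mulVec v j - u j) ^ 2) ≤ ε →
      ∑ i, |X 0 i| ≤ ∑ i, |v i|)
    -- subsequent steps: reweighted ℓ1-minimization with weights 1/(|X k i| + a k)
    (hXfeas : ∀ k, Real.sqrt (∑ j, (Φ.mulVec (X (k + 1)) j - u j) ^ 2) ≤ ε)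
    (hXmin : ∀ k, ∀ v : Fin d → ℝ,
      Real.sqrt (∑ j, (Φ.mulVec v j - u j) ^ 2) ≤ ε →
        ∑ i, |X (k + 1) i| / (|X k i| + a k) ≤ ∑ i, |v i| / (|X k i| + a k))
    -- the limiting approximation
    (xhat : Fin d → ℝ) (hlim : Tendsto X atTop (nhds xhat)) :
    Real.sqrt (∑ i, (x i - xhat i) ^ 2) ≤
        2 * α * ε / (1 + Real.sqrt (1 - 4 * α * ε / μ - 4 * α * ε * ρ / μ)) ∧
      2 * α * ε / (1 + Real.sqrt (1 - 4 * α * ε / μ - 4 * α * ε * ρ / μ)) ≤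
        2 * α * ε / (1 + ρ) := by
  set T := univ.filter fun i => x i ≠ 0
  have hx : ∀ i ∉ T, x i = 0 := fun i hi => by simpa [T] using hi
  have hxT : ∀ i ∈ T, μ ≤ |x i| := fun i hi => hμmin i (by simpa [T] using hi)
  have hδ1 : δ < 1 := by linarith [Real.sqrt_two_lt_three_halves]
  have hρ0 : 0 ≤ ρ := hρ ▸ div_nonneg (by positivity) (by linarith)
  have hρ1 : ρ < 1 := hρ ▸ sqrt_two_mul_div_one_sub_lt_one hδ
  have hβ : 0 < α * ε := mul_pos (hα ▸ div_pos (by positivity) (by linarith)) hε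
  have hμ' : 4 * (α * ε) / (1 - ρ) ≤ μ := by rwa [← mul_assoc]
  have hx_feas : √(∑ j, (Φ.mulVec x j - u j) ^ 2) ≤ ε := by simpa [hu] using he
  have hE0 : √(∑ i, (x i - X 0 i) ^ 2) ≤ μ / 2 :=
    (RIP.error_le_of_l1_min hs hRIP hδ0.le hδ1 hρ hα hρ1 hxs hx hx_feas hX0feas
      (hX0min x hx_feas)).trans
      (by simpa [one_add_one_eq_two] using
        sqrt_one_add_sq_mul_div_le_half hρ0 hρ1 hβ.le hμ' zero_le_one le_rfl)
  have hL := limit_lt_smaller_root hρ0 hρ1 hβ hμ' (fun k => Real.sqrt_nonneg _) ha ha0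
    (((by fun_prop : Continuous fun v : Fin d → ℝ => √(∑ i, (x i - v i) ^ 2)).tendsto xhat).comp
      hlim) hE0 fun k hk =>
    RIP.error_le_of_reweighted_l1_min hs hRIP hδ0.le hδ1 hρ hα hρ1 hxs hx hxT hx_feas
      (Real.sqrt_nonneg _) (fun i => abs_le_sqrt_sum_sq (x - X k) i) hk (ha k) (hXfeas k)
      (hXmin k x hx_feas)
  have hρt := Real.le_sqrt_of_sq_le (sq_le_discriminant hρ0 hρ1 hβ hμ')
  simp only [← mul_assoc] at hL hρt
  exact ⟨hL.le, div_le_div_of_nonneg_left (by linarith) (by linarith) (by linarith)⟩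

theorem reweighted_l1_sparse_case
    (m d s : ℕ) (hs : 0 < s)
    (Φ : Matrix (Fin m) (Fin d) ℝ) (δ : ℝ)
    (hδ0 : 0 < δ) (hδ : δ < Real.sqrt 2 - 1)
    (hRIP : RIP Φ (2 * s) δ)
    (ρ α : ℝ)
    (hρ : ρ = Real.sqrt 2 * δ / (1 - δ))
    (hα : α = 2 * Real.sqrt (1 + δ) / (1 - δ))
    (x : Fin d → ℝ)
    (hxs : (Finset.univ.filter fun i => x i ≠ 0).card ≤ s)
    (e : Fin m → ℝ) (ε : ℝ) (hε : 0 < ε)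
    (he : Real.sqrt (∑ j, (e j) ^ 2) ≤ ε)
    (u : Fin m → ℝ) (hu : u = Φ.mulVec x + e)
    (μ : ℝ) (hμmin : ∀ i, x i ≠ 0 → μ ≤ |x i|)
    (hμne : ∃ i, x i ≠ 0 ∧ |x i| = μ)
    (hμ : μ ≥ 4 * α * ε / (1 - ρ))
    -- the iteratively reweighted ℓ1 algorithm: iterates `X k` with stability
    -- parameters `a k → 0`, `a k > 0`
    (X : ℕ → Fin d → ℝ) (a : ℕ → ℝ) (ha : ∀ k, 0 < a k)
    (ha0 : Tendsto a atTop (nhds 0))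
    -- initial step: weights all equal to one (standard ℓ1-minimization)
    (hX0feas : Real.sqrt (∑ j, (Φ.mulVec (X 0) j - u j) ^ 2) ≤ ε)
    (hX0min : ∀ v : Fin d → ℝ, Real.sqrt (∑ j, (Φ.mulVec v j - u j) ^ 2) ≤ ε →
      ∑ i, |X 0 i| ≤ ∑ i, |v i|)
    -- subsequent steps: reweighted ℓ1-minimization with weights 1/(|X k i| + a k)
    (hXfeas : ∀ k, Real.sqrt (∑ j, (Φ.mulVec (X (k + 1)) j - u j) ^ 2) ≤ ε)
    (hXmin : ∀ k, ∀ v : Fin d → ℝ,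
      Real.sqrt (∑ j, (Φ.mulVec v j - u j) ^ 2) ≤ ε →
        ∑ i, |X (k + 1) i| / (|X k i| + a k) ≤ ∑ i, |v i| / (|X k i| + a k))
    -- the limiting approximation
    (xhat : Fin d → ℝ) (hlim : Tendsto X atTop (nhds xhat)) :
    Real.sqrt (∑ i, (x i - xhat i) ^ 2) ≤
        2 * α * ε / (1 + Real.sqrt (1 - 4 * α * ε / μ - 4 * α * ε * ρ / μ)) ∧
      2 * α * ε / (1 + Real.sqrt (1 - 4 * α * ε / μ - 4 * α * ε * ρ / μ)) ≤
        2 * α * ε / (1 + ρ) :=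
  reweighted_l1_sparse_case_general m d s hs Φ δ hδ0 hδ hRIP ρ α hρ hα x hxs e ε hε he u hu μ hμmin
    hμ X a ha ha0 hX0feas hX0min hXfeas hXmin xhat hlim
end
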